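/- arXiv:math/0409251 — 7 statements merged into one kernel-verified Lean document; each statement's English description precedes it below -/
import Mathlib

section
/- Let g = r_{3,λ} ⊕ k be the 4-dimensional Lie algebra over a field k of characteristic zero with basis e₁,e₂,e₃,e₄ and nonzero brackets [e₁,e₂] = e₂, [e₁,e₃] = λe₃, where λ ≠ 0. Then g admits a nondegenerate 2-cocycle (symplectic structure) if and only if λ = -1. -/
/-!
If `λ ≠ -1`, the cocycle identity with `x = e₁` gives `(α + β) ω(y, z) = 0` whenever
`y, z` are `ad e₁`-eigenvectors with eigenvalues `α, β` in the abelian ideal `⟨e₂, e₃, e₄⟩`;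
the eigenvalues are `1, λ, 0` and no two of them sum to zero. So this three-dimensional ideal
is isotropic, which a nondegenerate form on a four-dimensional space does not allow.
For `λ = -1`, `e¹ ∧ e⁴ + e² ∧ e³` is a symplectic form.
-/

open LinearMap (BilinForm)
open LinearMap.BilinForm Module

lemma LinearMap.BilinForm.span_le_orthogonal_span {R M : Type*} [CommRing R] [AddCommGroup M]
    [Module R M] {B : BilinForm R M} {s : Set M} (h : ∀ x ∈ s, ∀ y ∈ s, B x y = 0) :
    Submodule.span R s ≤ B.orthogonal (Submodule.span R s) :=
  Submodule.span_le.mpr fun y hy _ hx =>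
    (Submodule.span_le (p := LinearMap.ker (B.flip y))).mpr (fun x hx' => h x hx' y hy) hx

lemma LinearMap.BilinForm.two_mul_finrank_le_of_le_orthogonal {K V : Type*} [Field K]
    [AddCommGroup V] [Module K V] [FiniteDimensional K V] {B : BilinForm K V}
    (hrefl : B.IsRefl) (hsep : B.SeparatingLeft) {W : Submodule K V}
    (hW : W ≤ B.orthogonal W) : 2 * finrank K W ≤ finrank K V := by
  have hle := Submodule.finrank_mono hW
  rw [finrank_orthogonal (hrefl.nondegenerate_iff_separatingLeft.mpr hsep)] at hle
  have := Submodule.finrank_le W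
  omega

lemma add_mul_eq_zero_of_lie_eq_smul {R L : Type*} [CommRing R] [LieRing L] [LieAlgebra R L]
    (ω : L →ₗ[R] L →ₗ[R] R) (hskew : ∀ x y, ω x y = -ω y x)
    (hcoc : ∀ x y z, ω ⁅x, y⁆ z - ω ⁅x, z⁆ y + ω ⁅y, z⁆ x = 0)
    {d y z : L} {a b : R} (hy : ⁅d, y⁆ = a • y) (hz : ⁅d, z⁆ = b • z) (hyz : ⁅y, z⁆ = 0) :
    (a + b) * ω y z = 0 := by
  have h := hcoc d y z
  rw [hy, hz, hyz] at h
  simp only [map_smul, LinearMap.smul_apply, smul_eq_mul, map_zero, LinearMap.zero_apply] at h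
  linear_combination h + b * hskew z y

section

variable {k g : Type*} [Field k] [LieRing g] [LieAlgebra k g]

lemma lie_eq_of_r3lam (lam : k) (e : Basis (Fin 4) k g)
    (h12 : ⁅e 0, e 1⁆ = e 1) (h13 : ⁅e 0, e 2⁆ = lam • e 2)
    (h14 : ⁅e 0, e 3⁆ = 0) (h23 : ⁅e 1, e 2⁆ = 0)
    (h24 : ⁅e 1, e 3⁆ = 0) (h34 : ⁅e 2, e 3⁆ = 0) (u v : g) :
    ⁅u, v⁆ = (e.coord 0 u * e.coord 1 v - e.coord 1 u * e.coord 0 v) • e 1 +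
      (lam * (e.coord 0 u * e.coord 2 v - e.coord 2 u * e.coord 0 v)) • e 2 := by
  have h21 : ⁅e 1, e 0⁆ = -e 1 := by rw [← lie_skew, h12]
  have h31 : ⁅e 2, e 0⁆ = -(lam • e 2) := by rw [← lie_skew, h13]
  have h41 : ⁅e 3, e 0⁆ = 0 := by rw [← lie_skew, h14, neg_zero]
  have h32 : ⁅e 2, e 1⁆ = 0 := by rw [← lie_skew, h23, neg_zero]
  have h42 : ⁅e 3, e 1⁆ = 0 := by rw [← lie_skew, h24, neg_zero]
  have h43 : ⁅e 3, e 2⁆ = 0 := by rw [← lie_skew, h34, neg_zero]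
  conv_lhs => rw [← e.sum_repr u, ← e.sum_repr v]
  simp only [Fin.sum_univ_four, add_lie, lie_add, smul_lie, lie_smul, h12, h13, h14, h23, h24,
    h34, h21, h31, h41, h42, h32, h43, lie_self, smul_zero, smul_neg, add_zero, zero_add,
    smul_smul, Basis.coord_apply]
  module

noncomputable def darbouxForm (e : Basis (Fin 4) k g) : BilinForm k g :=
  linMulLin (e.coord 0) (e.coord 3) - linMulLin (e.coord 3) (e.coord 0) +
    linMulLin (e.coord 1) (e.coord 2) - linMulLin (e.coord 2) (e.coord 1)

lemma darbouxForm_apply (e : Basis (Fin 4) k g) (x y : g) :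
    darbouxForm e x y = e.coord 0 x * e.coord 3 y - e.coord 3 x * e.coord 0 y +
      e.coord 1 x * e.coord 2 y - e.coord 2 x * e.coord 1 y := by
  simp [darbouxForm, linMulLin_apply]

lemma darbouxForm_skew (e : Basis (Fin 4) k g) (x y : g) :
    darbouxForm e x y = -darbouxForm e y x := by
  simp only [darbouxForm_apply]
  ring

lemma darbouxForm_separatingLeft (e : Basis (Fin 4) k g) : (darbouxForm e).SeparatingLeft := by
  intro x hx
  refine e.ext_elem fun i => ?_
  have h0 := hx (e 3)
  have h1 := hx (e 2)
  have h2 := hx (e 1)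
  have h3 := hx (e 0)
  fin_cases i <;> simp_all [darbouxForm_apply]

lemma darbouxForm_cocycle (e : Basis (Fin 4) k g)
    (h12 : ⁅e 0, e 1⁆ = e 1) (h13 : ⁅e 0, e 2⁆ = (-1 : k) • e 2)
    (h14 : ⁅e 0, e 3⁆ = 0) (h23 : ⁅e 1, e 2⁆ = 0)
    (h24 : ⁅e 1, e 3⁆ = 0) (h34 : ⁅e 2, e 3⁆ = 0) (x y z : g) :
    darbouxForm e ⁅x, y⁆ z - darbouxForm e ⁅x, z⁆ y + darbouxForm e ⁅y, z⁆ x = 0 := by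
  simp only [lie_eq_of_r3lam (-1) e h12 h13 h14 h23 h24 h34, darbouxForm_apply]
  simp only [map_add, map_smul, Basis.coord_apply, Basis.repr_self,
    Finsupp.single_apply, smul_eq_mul, Fin.reduceEq, reduceIte]
  ring

lemma eq_neg_one_of_r3lam_symplectic [CharZero k] {lam : k} (hlam : lam ≠ 0)
    (e : Basis (Fin 4) k g)
    (h12 : ⁅e 0, e 1⁆ = e 1) (h13 : ⁅e 0, e 2⁆ = lam • e 2)
    (h14 : ⁅e 0, e 3⁆ = 0) (h23 : ⁅e 1, e 2⁆ = 0)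
    (h24 : ⁅e 1, e 3⁆ = 0) (h34 : ⁅e 2, e 3⁆ = 0) (ω : BilinForm k g)
    (hskew : ∀ x y, ω x y = -ω y x)
    (hcoc : ∀ x y z, ω ⁅x, y⁆ z - ω ⁅x, z⁆ y + ω ⁅y, z⁆ x = 0)
    (hsep : ω.SeparatingLeft) : lam = -1 := by
  by_contra hne
  have halt : ω.IsAlt := LinearMap.isAlt_iff_eq_neg_flip.mpr (LinearMap.ext₂ hskew)
  have h1 : ⁅e 0, e 1⁆ = (1 : k) • e 1 := by rw [h12, one_smul]
  have h3 : ⁅e 0, e 3⁆ = (0 : k) • e 3 := by rw [h14, zero_smul]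
  have ω12 : ω (e 1) (e 2) = 0 := by
    have := add_mul_eq_zero_of_lie_eq_smul ω hskew hcoc h1 h13 h23
    exact (mul_eq_zero.mp this).resolve_left fun h => hne (by linear_combination h)
  have ω13 : ω (e 1) (e 3) = 0 := by
    simpa using add_mul_eq_zero_of_lie_eq_smul ω hskew hcoc h1 h3 h24
  have ω23 : ω (e 2) (e 3) = 0 := by
    simpa [hlam] using add_mul_eq_zero_of_lie_eq_smul ω hskew hcoc h13 h3 h34
  have hW : Submodule.span k (Set.range (e ∘ Fin.succ)) ≤
      ω.orthogonal (Submodule.span k (Set.range (e ∘ Fin.succ))) := by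
    refine span_le_orthogonal_span ?_
    rintro _ ⟨i, rfl⟩ _ ⟨j, rfl⟩
    fin_cases i <;> fin_cases j <;>
      simp [halt.self_eq_zero, ω12, ω13, ω23, hskew (e 2) (e 1), hskew (e 3) (e 1),
        hskew (e 3) (e 2)]
  have : FiniteDimensional k g := e.finiteDimensional_of_finite
  have := two_mul_finrank_le_of_le_orthogonal halt.isRefl hsep hW
  rw [finrank_span_eq_card (e.linearIndependent.comp _ (Fin.succ_injective _)),
    finrank_eq_card_basis e] at this
  simp at this

end

/-- The Lie algebra `r_{3,λ} ⊕ k` (basis `e₁,…,e₄`, nonzero brackets `[e₁,e₂] = e₂`,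
`[e₁,e₃] = λ e₃`, with `λ ≠ 0`) admits a symplectic structure (a nondegenerate
2-cocycle) if and only if `λ = -1`. -/
theorem r3lam_symplectic_iff (k g : Type*) [Field k] [CharZero k]
    [LieRing g] [LieAlgebra k g]
    (lam : k) (hlam : lam ≠ 0)
    (e : Module.Basis (Fin 4) k g)
    (h12 : ⁅e 0, e 1⁆ = e 1) (h13 : ⁅e 0, e 2⁆ = lam • e 2)
    (h14 : ⁅e 0, e 3⁆ = 0) (h23 : ⁅e 1, e 2⁆ = 0)
    (h24 : ⁅e 1, e 3⁆ = 0) (h34 : ⁅e 2, e 3⁆ = 0) :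
    (∃ ω : g →ₗ[k] g →ₗ[k] k,
      (∀ x y : g, ω x y = - ω y x) ∧
      (∀ x y z : g, ω ⁅x, y⁆ z - ω ⁅x, z⁆ y + ω ⁅y, z⁆ x = 0) ∧
      (∀ x : g, (∀ y : g, ω x y = 0) → x = 0)) ↔ lam = -1 := by
  constructor
  · rintro ⟨ω, hskew, hcoc, hsep⟩
    exact eq_neg_one_of_r3lam_symplectic hlam e h12 h13 h14 h23 h24 h34 ω hskew hcoc hsep
  · rintro rfl
    exact ⟨darbouxForm e, darbouxForm_skew e, darbouxForm_cocycle e h12 h13 h14 h23 h24 h34,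
      darbouxForm_separatingLeft e⟩
end

section
/- The Lie algebra sl₂(ℂ) ⊕ ℂ is not symplectic: it admits no nondegenerate skew-symmetric bilinear form satisfying the 2-cocycle condition. -/
/-!
For a central element `z`, the cocycle identity reduces to `B ⁅x, y⁆ z = 0`, so `B (·) z`
vanishes on the derived algebra. Since `sl₂` is perfect, `e 0, e 1, e 2` are multiples of
brackets, and skew-symmetry gives `B z z = 0`; hence the central `e 3` lies in the radical of `B`.
-/

section

variable {R L : Type*} [CommRing R] [LieRing L] [LieAlgebra R L]

theorem lie_eq_zero_of_basis {ι : Type*} (e : Module.Basis ι R L) {z : L}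
    (h : ∀ i, ⁅e i, z⁆ = 0) (x : L) : ⁅x, z⁆ = 0 := by
  have : (LieAlgebra.ad R L : L →ₗ[R] Module.End R L).flip z = 0 :=
    e.ext fun i => by simpa using h i
  simpa using LinearMap.congr_fun this x

theorem cocycle_apply_lie_central {B : L →ₗ[R] L →ₗ[R] R}
    (hcoc : ∀ x y z : L, B ⁅x, y⁆ z - B x ⁅y, z⁆ + B y ⁅x, z⁆ = 0)
    {z : L} (hz : ∀ x : L, ⁅x, z⁆ = 0) (x y : L) : B ⁅x, y⁆ z = 0 := by
  simpa [hz] using hcoc x y z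

end

/-- The Lie algebra `sl₂(ℂ) ⊕ ℂ` (basis `H,E,F,Z` with `[H,E] = 2E`, `[H,F] = -2F`,
`[E,F] = H` and `Z` central) is not symplectic: it admits no nondegenerate
skew-symmetric bilinear form satisfying the 2-cocycle condition. -/
theorem sl2_plus_C_not_symplectic (g : Type*) [LieRing g] [LieAlgebra ℂ g]
    (e : Module.Basis (Fin 4) ℂ g)
    (hHE : ⁅e 0, e 1⁆ = (2 : ℂ) • e 1)
    (hHF : ⁅e 0, e 2⁆ = (-2 : ℂ) • e 2)
    (hEF : ⁅e 1, e 2⁆ = e 0)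
    (hZ : ∀ i : Fin 4, ⁅e i, e 3⁆ = 0) :
    ¬ ∃ B : g →ₗ[ℂ] g →ₗ[ℂ] ℂ,
      (∀ x y : g, B x y = - B y x) ∧
      (∀ x y z : g, B ⁅x, y⁆ z - B x ⁅y, z⁆ + B y ⁅x, z⁆ = 0) ∧
      (∀ x : g, (∀ y : g, B x y = 0) → x = 0) := by
  rintro ⟨B, hskew, hcoc, hnd⟩
  have hder := cocycle_apply_lie_central hcoc (lie_eq_zero_of_basis e hZ)
  have hvanish : ∀ i, B (e i) (e 3) = 0 := by
    intro i
    fin_cases i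
    · simpa [hEF] using hder (e 1) (e 2)
    · simpa [hHE] using hder (e 0) (e 1)
    · simpa [hHF] using hder (e 0) (e 2)
    · change B (e 3) (e 3) = 0
      linear_combination hskew (e 3) (e 3) / 2
  have hflip : B.flip (e 3) = 0 := e.ext fun i => by simpa using hvanish i
  refine e.ne_zero 3 (hnd _ fun y => ?_)
  rw [hskew, ← B.flip_apply, hflip, LinearMap.zero_apply, neg_zero]
end

section
/- Let g be a Lie algebra over a field k and M a g-module whose underlying vector space equals that of g. If there exists a bijective linear map φ : g → M satisfying the 1-cocycle condition φ([x,y]) = x • φ(y) - y • φ(x), then the product x · y := φ⁻¹(x • φ(y)) is left-symmetric (i.e. satisfies x·(y·z) - (x·y)·z = y·(x·z) - (y·x)·z) and satisfies x·y - y·x = [x,y]; hence g admits an affine structure. -/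
/-- If `M` is a `g`-module (on the same underlying vector space, identified with `g`
via a bijective linear map `φ`) and `φ : g → M` is a bijective 1-cocycle, then the
product `x · y := φ⁻¹(x • φ(y))` is left-symmetric and satisfies
`x·y - y·x = [x,y]`; hence `g` admits an affine structure. -/
theorem nonsingular_cocycle_gives_affine (k g M : Type*) [Field k]
    [LieRing g] [LieAlgebra k g]
    [AddCommGroup M] [Module k M] [LieRingModule g M] [LieModule k g M]
    (φ : g ≃ₗ[k] M)
    (hφ : ∀ x y : g, φ ⁅x, y⁆ = ⁅x, φ y⁆ - ⁅y, φ x⁆)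
    (mul : g → g → g)
    (hmul : ∀ x y : g, mul x y = φ.symm ⁅x, φ y⁆) :
    (∀ x y z : g,
      mul x (mul y z) - mul (mul x y) z = mul y (mul x z) - mul (mul y x) z) ∧
    (∀ x y : g, mul x y - mul y x = ⁅x, y⁆) := by

  have hab : ∀ x y : g, φ.symm ⁅x, φ y⁆ - φ.symm ⁅y, φ x⁆ = ⁅x, y⁆ := by
    intro x y
    rw [← map_sub, ← hφ, φ.symm_apply_apply]
  constructor
  · intro x y z
    apply φ.injective
    simp only [hmul, LinearEquiv.apply_symm_apply, map_sub]
    have h1 : ⁅(⁅x, y⁆ : g), φ z⁆ = ⁅x, ⁅y, φ z⁆⁆ - ⁅y, ⁅x, φ z⁆⁆ := lie_lie x y (φ z)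
    have h2 : ⁅(⁅x, y⁆ : g), φ z⁆ =
        ⁅φ.symm ⁅x, φ y⁆, φ z⁆ - ⁅φ.symm ⁅y, φ x⁆, φ z⁆ := by
      rw [← hab x y, sub_lie]
    have key := h1.symm.trans h2
    rw [sub_eq_sub_iff_sub_eq_sub]
    exact key
  · intro x y
    rw [hmul, hmul]
    exact hab x y
end

section
/- Any finite-dimensional Lie algebra g over a field k admitting a nonsingular (invertible) derivation D admits an affine structure: the product x · y := D⁻¹(ad(x)(D(y))) is left-symmetric and satisfies x·y - y·x = [x,y]. -/
/-- A Lie algebra admitting an invertible derivation `D` admits an affine structure: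
the product `x · y := D⁻¹([x, D(y)])` is left-symmetric and satisfies
`x·y - y·x = [x,y]`. -/
theorem nonsingular_derivation_gives_affine (k g : Type*) [Field k]
    [LieRing g] [LieAlgebra k g] [Module.Finite k g]
    (D : g ≃ₗ[k] g)
    (hD : ∀ x y : g, D ⁅x, y⁆ = ⁅D x, y⁆ + ⁅x, D y⁆)
    (mul : g → g → g)
    (hmul : ∀ x y : g, mul x y = D.symm ⁅x, D y⁆) :
    (∀ x y z : g,
      mul x (mul y z) - mul (mul x y) z = mul y (mul x z) - mul (mul y x) z) ∧
    (∀ x y : g, mul x y - mul y x = ⁅x, y⁆) := by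
  have key : ∀ a b : g, D (mul a b) = ⁅a, D b⁆ := fun a b => by
    rw [hmul]; exact D.apply_symm_apply _
  have hsub : ∀ x y : g, mul x y - mul y x = ⁅x, y⁆ := by
    intro x y
    apply D.injective
    rw [map_sub, key, key, hD]
    rw [← lie_skew (D x) y]
    abel
  refine ⟨?_, hsub⟩
  intro x y z
  apply D.injective
  rw [map_sub, map_sub, key, key, key, key, key, key]
  rw [show mul x y = ⁅x, y⁆ + mul y x from by rw [← hsub x y]; abel]
  rw [add_lie, leibniz_lie x y (D z)]
  abel
end

section
/- Every symplectic Lie algebra is affine: if ω is a nondegenerate 2-cocycle on g with values in the trivial module k, then the map φ : g → g* defined by φ(x)(y) = ω(x,y) is an injective (hence bijective, in finite dimension) 1-cocycle with values in the coadjoint module, and the induced product x · y := φ⁻¹(x • φ(y)) defines an affine structure on g. -/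
/-- Every symplectic Lie algebra is affine: if `ω` is a nondegenerate 2-cocycle on a
finite-dimensional Lie algebra `g`, then `φ : g → g*`, `φ(x)(y) = ω(x,y)`, is a
bijective 1-cocycle for the coadjoint module, and the product `x · y := φ⁻¹(x • φ(y))`
(characterized by `ω(x·y, z) = -ω(y, [x,z])`) is an affine structure on `g`. -/
theorem symplectic_is_affine (k g : Type*) [Field k]
    [LieRing g] [LieAlgebra k g] [Module.Finite k g]
    (ω : g →ₗ[k] g →ₗ[k] k)
    (hskew : ∀ x y : g, ω x y = - ω y x)
    (hcocycle : ∀ x y z : g, ω ⁅x, y⁆ z - ω ⁅x, z⁆ y + ω ⁅y, z⁆ x = 0)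
    (hnd : ∀ x : g, (∀ y : g, ω x y = 0) → x = 0) :
    Function.Bijective ω ∧
    (∀ x y z : g, ω ⁅x, y⁆ z = - ω y ⁅x, z⁆ + ω x ⁅y, z⁆) ∧
    ∃ mul : g → g → g,
      (∀ x y z : g, ω (mul x y) z = - ω y ⁅x, z⁆) ∧
      (∀ x y z : g,
        mul x (mul y z) - mul (mul x y) z = mul y (mul x z) - mul (mul y x) z) ∧
      (∀ x y : g, mul x y - mul y x = ⁅x, y⁆) := by
  have hFD : FiniteDimensional k g := ‹Module.Finite k g›
  -- injectivity
  have hinj : Function.Injective ω := by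
    intro a b hab
    have h0 : ∀ y : g, ω (a - b) y = 0 := by
      intro y
      simp [map_sub, hab]
    exact sub_eq_zero.mp (hnd (a - b) h0)
  -- extensionality principle
  have hext : ∀ a b : g, (∀ z : g, ω a z = ω b z) → a = b := by
    intro a b h
    have h0 : ∀ y : g, ω (a - b) y = 0 := by
      intro y
      simp [map_sub, h y]
    exact sub_eq_zero.mp (hnd (a - b) h0)
  -- finrank of dual equals finrank
  have hrank : Module.finrank k g = Module.finrank k (g →ₗ[k] k) :=
    (Subspace.dual_finrank_eq (K := k) (V := g)).symm
  -- surjectivity via the linear equivalence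
  have hsurj : Function.Surjective ω := by
    intro f
    refine ⟨(ω.linearEquivOfInjective hinj hrank).symm f, ?_⟩
    have := (ω.linearEquivOfInjective hinj hrank).apply_symm_apply f
    rwa [LinearMap.linearEquivOfInjective_apply] at this
  -- the 1-cocycle identity
  have hid : ∀ x y z : g, ω ⁅x, y⁆ z = - ω y ⁅x, z⁆ + ω x ⁅y, z⁆ := by
    intro x y z
    linear_combination hcocycle x y z + hskew ⁅x, z⁆ y - hskew ⁅y, z⁆ x
  -- the product
  have hsurj' := hsurj
  choose mulAux hmulAux using hsurj'
  set mul : g → g → g := fun x y => mulAux (-((ω y).comp (LieAlgebra.ad k g x))) with hmuldef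
  have hm : ∀ x y z : g, ω (mul x y) z = - ω y ⁅x, z⁆ := by
    intro x y z
    have := congrFun (congrArg (DFunLike.coe) (hmulAux (-((ω y).comp (LieAlgebra.ad k g x))))) z
    simpa using this
  have hcomm : ∀ x y : g, mul x y - mul y x = ⁅x, y⁆ := by
    intro x y
    apply hext
    intro w
    have h1 : ω (mul x y - mul y x) w = ω (mul x y) w - ω (mul y x) w := by
      simp [map_sub]
    rw [h1, hm, hm, hid x y w]
    ring
  refine ⟨⟨hinj, hsurj⟩, hid, mul, hm, ?_, hcomm⟩
  intro x y z
  apply hext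
  intro w
  have e1 : ω (mul x (mul y z)) w = ω z ⁅y, ⁅x, w⁆⁆ := by
    rw [hm, hm]; ring
  have e2 : ω (mul y (mul x z)) w = ω z ⁅x, ⁅y, w⁆⁆ := by
    rw [hm, hm]; ring
  have hbr : ⁅mul x y, w⁆ = ⁅x, ⁅y, w⁆⁆ - ⁅y, ⁅x, w⁆⁆ + ⁅mul y x, w⁆ := by
    have h := congrArg (fun v => ⁅v, w⁆) (hcomm x y)
    simp only [sub_lie, lie_lie] at h
    have := eq_add_of_sub_eq h
    rw [this]
  have h1 : ω (mul x (mul y z) - mul (mul x y) z) w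
      = ω (mul x (mul y z)) w - ω (mul (mul x y) z) w := by simp [map_sub]
  have h2 : ω (mul y (mul x z) - mul (mul y x) z) w
      = ω (mul y (mul x z)) w - ω (mul (mul y x) z) w := by simp [map_sub]
  rw [h1, h2, e1, e2, hm, hm, hbr]
  simp only [map_add, map_sub, LinearMap.add_apply, LinearMap.sub_apply, map_neg]
  ring
end

section
/- Let g be the 6-dimensional nilpotent Lie algebra over ℂ with basis e₁,…,e₆ and nonzero brackets [e₁,eᵢ] = e_{i+1} for 2 ≤ i ≤ 5, [e₂,e₅] = -e₆, [e₃,e₄] = e₆. Then every 2-cocycle ω ∈ Z²(g,ℂ) satisfies ω(x, e₆) = 0 for all x in the span of e₂, e₃, e₄, e₅, e₆; in particular g admits no nondegenerate 2-cocycle, i.e. g is not symplectic. -/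
/-!
Paper indices: `eᵢ` is `e (i - 1)` in Lean. Since `e₆ = ⁅e₃, e₄⁆ = -⁅e₂, e₅⁆` and each of the
triples `(e₂,e₃,e₄)`, `(e₂,e₃,e₅)`, `(e₂,e₄,e₅)`, `(e₃,e₄,e₅)` has two commuting pairs, the
cocycle identity on it collapses to `ω(e₆, eᵢ) = 0` for `i = 2, …, 5`. The triples `(e₁,e₃,e₄)`
and `(e₁,e₂,e₅)` then give `ω(e₆,e₁) = ω(e₅,e₃)` and `ω(e₆,e₁) = ω(e₃,e₅)`, so skew-symmetry
forces `ω(e₆,e₁) = 0`. Thus `ω(e₆, ·)` vanishes on a basis and `e₆ ≠ 0` lies in the radical of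
every 2-cocycle.
-/

theorem LinearMap.apply_self_eq_zero_of_skew {R N M : Type*} [CommSemiring R] [AddCommMonoid N]
    [Module R N] [AddCommGroup M] [Module R M] [IsAddTorsionFree M] {ω : N →ₗ[R] N →ₗ[R] M}
    (hskew : ∀ x y : N, ω x y = -ω y x) (x : N) : ω x x = 0 :=
  self_eq_neg.mp (hskew x x)

theorem dim6_cocycle_apply_e5_eq_zero {R L M : Type*} [CommRing R] [LieRing L] [LieAlgebra R L]
    [AddCommGroup M] [Module R M] [IsAddTorsionFree M] {ω : L →ₗ[R] L →ₗ[R] M}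
    (e : Module.Basis (Fin 6) R L)
    (h12 : ⁅e 0, e 1⁆ = e 2) (h13 : ⁅e 0, e 2⁆ = e 3)
    (h14 : ⁅e 0, e 3⁆ = e 4) (h15 : ⁅e 0, e 4⁆ = e 5)
    (h23 : ⁅e 1, e 2⁆ = 0) (h24 : ⁅e 1, e 3⁆ = 0) (h25 : ⁅e 1, e 4⁆ = - e 5)
    (h34 : ⁅e 2, e 3⁆ = e 5) (h35 : ⁅e 2, e 4⁆ = 0) (h45 : ⁅e 3, e 4⁆ = 0)
    (hskew : ∀ x y : L, ω x y = -ω y x)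
    (hcoc : ∀ x y z : L, ω ⁅x, y⁆ z - ω ⁅x, z⁆ y + ω ⁅y, z⁆ x = 0) :
    ω (e 5) = 0 := by
  have h62 : ω (e 5) (e 1) = 0 := by simpa [h23, h24, h34] using hcoc (e 1) (e 2) (e 3)
  have h63 : ω (e 5) (e 2) = 0 := by simpa [h23, h25, h35] using hcoc (e 1) (e 2) (e 4)
  have h64 : ω (e 5) (e 3) = 0 := by simpa [h24, h25, h45] using hcoc (e 1) (e 3) (e 4)
  have h65 : ω (e 5) (e 4) = 0 := by simpa [h34, h35, h45] using hcoc (e 2) (e 3) (e 4)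
  have h61 : ω (e 5) (e 0) = 0 := by
    have h134 : ω (e 5) (e 0) = ω (e 4) (e 2) := by
      have := hcoc (e 0) (e 2) (e 3)
      rw [h13, h14, h34, LinearMap.apply_self_eq_zero_of_skew hskew, zero_sub,
        neg_add_eq_zero] at this
      exact this.symm
    have h125 : ω (e 5) (e 0) = ω (e 2) (e 4) := by
      have := hcoc (e 0) (e 1) (e 4)
      rw [h12, h15, h25, h62, sub_zero, map_neg, LinearMap.neg_apply, add_neg_eq_zero] at this
      exact this.symm
    refine self_eq_neg.mp ?_
    calc ω (e 5) (e 0) = ω (e 4) (e 2) := h134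
      _ = -ω (e 2) (e 4) := hskew _ _
      _ = -ω (e 5) (e 0) := by rw [h125]
  refine e.ext fun i ↦ ?_
  fin_cases i
  exacts [h61, h62, h63, h64, h65, LinearMap.apply_self_eq_zero_of_skew hskew _]

theorem dim6_not_symplectic_general (g : Type*) [LieRing g] [LieAlgebra ℂ g]
    (e : Module.Basis (Fin 6) ℂ g)
    (h12 : ⁅e 0, e 1⁆ = e 2) (h13 : ⁅e 0, e 2⁆ = e 3)
    (h14 : ⁅e 0, e 3⁆ = e 4) (h15 : ⁅e 0, e 4⁆ = e 5)
    (h23 : ⁅e 1, e 2⁆ = 0) (h24 : ⁅e 1, e 3⁆ = 0)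
    (h25 : ⁅e 1, e 4⁆ = - e 5)
    (h34 : ⁅e 2, e 3⁆ = e 5) (h35 : ⁅e 2, e 4⁆ = 0)
    (h45 : ⁅e 3, e 4⁆ = 0) :
    ∀ ω : g →ₗ[ℂ] g →ₗ[ℂ] ℂ,
      (∀ x y : g, ω x y = - ω y x) →
      (∀ x y z : g, ω ⁅x, y⁆ z - ω ⁅x, z⁆ y + ω ⁅y, z⁆ x = 0) →
      (∀ x ∈ Submodule.span ℂ ({e 1, e 2, e 3, e 4, e 5} : Set g), ω x (e 5) = 0) ∧
      ¬ (∀ x : g, (∀ y : g, ω x y = 0) → x = 0) := by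
  intro ω hskew hcoc
  have h5 : ω (e 5) = 0 :=
    dim6_cocycle_apply_e5_eq_zero e h12 h13 h14 h15 h23 h24 h25 h34 h35 h45 hskew hcoc
  refine ⟨fun x _ ↦ by rw [hskew, h5, LinearMap.zero_apply, neg_zero], fun hnondeg ↦ ?_⟩
  exact e.ne_zero 5 (hnondeg (e 5) fun y ↦ by rw [h5, LinearMap.zero_apply])

/-- For the 6-dimensional nilpotent Lie algebra over `ℂ` with basis `e₁,…,e₆`, nonzero
brackets `[e₁,eᵢ] = e_{i+1}` (2 ≤ i ≤ 5), `[e₂,e₅] = -e₆`, `[e₃,e₄] = e₆`, every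
2-cocycle `ω` satisfies `ω(x,e₆) = 0` for all `x` in the span of `e₂,…,e₆`; in
particular there is no nondegenerate 2-cocycle, i.e. the algebra is not symplectic. -/
theorem dim6_not_symplectic (g : Type*) [LieRing g] [LieAlgebra ℂ g]
    (e : Module.Basis (Fin 6) ℂ g)
    (h12 : ⁅e 0, e 1⁆ = e 2) (h13 : ⁅e 0, e 2⁆ = e 3)
    (h14 : ⁅e 0, e 3⁆ = e 4) (h15 : ⁅e 0, e 4⁆ = e 5)
    (h16 : ⁅e 0, e 5⁆ = 0)
    (h23 : ⁅e 1, e 2⁆ = 0) (h24 : ⁅e 1, e 3⁆ = 0)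
    (h25 : ⁅e 1, e 4⁆ = - e 5) (h26 : ⁅e 1, e 5⁆ = 0)
    (h34 : ⁅e 2, e 3⁆ = e 5) (h35 : ⁅e 2, e 4⁆ = 0) (h36 : ⁅e 2, e 5⁆ = 0)
    (h45 : ⁅e 3, e 4⁆ = 0) (h46 : ⁅e 3, e 5⁆ = 0) (h56 : ⁅e 4, e 5⁆ = 0) :
    ∀ ω : g →ₗ[ℂ] g →ₗ[ℂ] ℂ,
      (∀ x y : g, ω x y = - ω y x) →
      (∀ x y z : g, ω ⁅x, y⁆ z - ω ⁅x, z⁆ y + ω ⁅y, z⁆ x = 0) →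
      (∀ x ∈ Submodule.span ℂ ({e 1, e 2, e 3, e 4, e 5} : Set g), ω x (e 5) = 0) ∧
      ¬ (∀ x : g, (∀ y : g, ω x y = 0) → x = 0) :=
  dim6_not_symplectic_general g e h12 h13 h14 h15 h23 h24 h25 h34 h35 h45
end

section
/- The system of equations in three unknowns a,b,c over a field of characteristic zero: b(2+a) - 3a² = 0, c(2 - a - b) + 2b(3b - 2a) = 0, 3c(a+b) - 4b² = 0, has exactly two solutions: (a,b,c) = (0,0,0) and (a,b,c) = (1/10, 1/70, 1/420). -/
/-- Over a field of characteristic zero the system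
`b(2+a) - 3a² = 0`, `c(2-a-b) + 2b(3b-2a) = 0`, `3c(a+b) - 4b² = 0`
has exactly two solutions: `(0,0,0)` and `(1/10, 1/70, 1/420)`. -/
theorem jacobi_system_solutions (k : Type*) [Field k] [CharZero k] (a b c : k) :
    (b * (2 + a) - 3 * a ^ 2 = 0 ∧
     c * (2 - a - b) + 2 * b * (3 * b - 2 * a) = 0 ∧
     3 * c * (a + b) - 4 * b ^ 2 = 0) ↔
    ((a = 0 ∧ b = 0 ∧ c = 0) ∨
     (a = 1 / 10 ∧ b = 1 / 70 ∧ c = 1 / 420)) := by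
  constructor
  · rintro ⟨h1, h2, h3⟩
    by_cases hb : b = 0
    · left
      subst hb
      have ha : a = 0 := by
        have : a ^ 2 = 0 := by linear_combination -h1 / 3
        exact pow_eq_zero_iff (n := 2) (by norm_num) |>.mp this
      subst ha
      refine ⟨rfl, rfl, ?_⟩
      linear_combination h2 / 2
    · right
      have key : b * (a * b + 7 * b ^ 2 - 6 * a ^ 2 + 4 * b) = 0 := by
        linear_combination (3 * (a + b) / 2) * h2 - ((2 - a - b) / 2) * h3
      have hE : a * b + 7 * b ^ 2 - 6 * a ^ 2 + 4 * b = 0 :=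
        (mul_eq_zero.mp key).resolve_left hb
      have h7 : b * (7 * b - a) = 0 := by linear_combination hE - 2 * h1
      have ha7 : a = 7 * b := by
        have h := (mul_eq_zero.mp h7).resolve_left hb
        linear_combination -h
      have hb2 : b * (2 - 140 * b) = 0 := by
        rw [ha7] at h1; linear_combination h1
      have hbv : b = 1 / 70 := by
        have h := (mul_eq_zero.mp hb2).resolve_left hb
        linear_combination -h / 140
      have hav : a = 1 / 10 := by rw [ha7, hbv]; norm_num
      refine ⟨hav, hbv, ?_⟩
      rw [hav, hbv] at h3
      linear_combination (35/12 : k) * h3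
  · rintro (⟨rfl, rfl, rfl⟩ | ⟨rfl, rfl, rfl⟩) <;>
      refine ⟨by norm_num, by norm_num, by norm_num⟩
end
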